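/- Let b₁, d₁, b₂, d₂ be reals with d₁ > d₂, and σ > 0. Then the limit as t → ∞ of [Φ((t−b₂)/σ)·Φ((d₂−t)/σ)] / [Φ((t−b₁)/σ)·Φ((d₁−t)/σ)] equals 0, where Φ is the standard normal CDF. -/

import Mathlib

/-!
Since `φ (s - c) = exp (c s - c² / 2) φ s` and `c s ≤ c x` on `s ≤ x` for `c ≥ 0`, integrating
gives `Φ (x - c) ≤ exp (c x - c² / 2) Φ x`, so `Φ (x - c) / Φ x → 0` as `x → -∞`. With
`x = (d₁ - t) / σ` and `c = (d₁ - d₂) / σ` this is the ratio of the second factors, while the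
ratio of the first factors stays below `1 / Φ 0`.
-/

open MeasureTheory Real Filter

noncomputable def phi (t : ℝ) : ℝ := Real.exp (-t^2/2) / Real.sqrt (2*Real.pi)

noncomputable def Phi (x : ℝ) : ℝ := ∫ s in Set.Iic x, phi s

open ProbabilityTheory Topology

lemma phi_eq_gaussianPDFReal : phi = gaussianPDFReal 0 1 := by
  ext t
  simp [phi, gaussianPDFReal, div_eq_inv_mul]

lemma phi_pos (t : ℝ) : 0 < phi t := by
  rw [phi_eq_gaussianPDFReal]; exact gaussianPDFReal_pos _ _ _ one_ne_zero

lemma integrable_phi : Integrable phi := by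
  rw [phi_eq_gaussianPDFReal]; exact integrable_gaussianPDFReal _ _

lemma phi_sub_eq_exp_mul (s c : ℝ) : phi (s - c) = exp (c * s - c ^ 2 / 2) * phi s := by
  simp only [phi, mul_div_assoc', ← exp_add]
  ring_nf

lemma Phi_sub_eq_integral (x c : ℝ) : Phi (x - c) = ∫ s in Set.Iic x, phi (s - c) := by
  have h := (measurePreserving_sub_right volume c).setIntegral_preimage_emb
    (measurableEmbedding_subRight c) phi (Set.Iic (x - c))
  rw [Set.preimage_sub_const_Iic, sub_add_cancel] at h
  exact h.symm

lemma Phi_sub_le_exp_mul_Phi (x : ℝ) {c : ℝ} (hc : 0 ≤ c) :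
    Phi (x - c) ≤ exp (c * x - c ^ 2 / 2) * Phi x := by
  rw [Phi_sub_eq_integral, Phi, ← integral_const_mul]
  refine setIntegral_mono_on (integrable_phi.comp_sub_right c).integrableOn
    (integrable_phi.const_mul _).integrableOn measurableSet_Iic fun s hs => ?_
  rw [phi_sub_eq_exp_mul]
  gcongr
  · exact (phi_pos s).le
  · exact hs

lemma Phi_pos (x : ℝ) : 0 < Phi x := by
  refine (setIntegral_pos_iff_support_of_nonneg_ae
    (ae_of_all _ fun s => (phi_pos s).le) integrable_phi.integrableOn).2 ?_
  simp [Function.support_eq_univ fun s => (phi_pos s).ne']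

lemma Phi_le_one (x : ℝ) : Phi x ≤ 1 := by
  calc Phi x ≤ ∫ s, phi s :=
        setIntegral_le_integral integrable_phi (ae_of_all _ fun s => (phi_pos s).le)
    _ = 1 := by rw [phi_eq_gaussianPDFReal]; exact integral_gaussianPDFReal_eq_one _ one_ne_zero

lemma Phi_mono : Monotone Phi := fun _ _ h =>
  setIntegral_mono_set integrable_phi.integrableOn (ae_of_all _ fun s => (phi_pos s).le)
    (Set.Iic_subset_Iic.2 h).eventuallyLE

lemma tendsto_Phi_sub_div_Phi_atBot {c : ℝ} (hc : 0 < c) :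
    Tendsto (fun x => Phi (x - c) / Phi x) atBot (𝓝 0) := by
  have hexp : Tendsto (fun x => exp (c * x - c ^ 2 / 2)) atBot (𝓝 0) :=
    tendsto_exp_atBot.comp <| tendsto_atBot_add_const_right _ _ <|
      tendsto_id.const_mul_atBot hc
  refine squeeze_zero (fun x => div_nonneg (Phi_pos _).le (Phi_pos _).le) (fun x => ?_) hexp
  rw [div_le_iff₀ (Phi_pos x)]
  exact Phi_sub_le_exp_mul_Phi x hc.le

theorem stmt18 (b₁ d₁ b₂ d₂ σ : ℝ) (hd : d₂ < d₁) (hσ : 0 < σ) :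
    Tendsto (fun t : ℝ =>
        (Phi ((t - b₂) / σ) * Phi ((d₂ - t) / σ)) /
        (Phi ((t - b₁) / σ) * Phi ((d₁ - t) / σ))) atTop (nhds 0) := by
  have hx : Tendsto (fun t => (d₁ - t) / σ) atTop atBot :=
    (tendsto_atBot_add_const_left _ d₁ tendsto_neg_atTop_atBot).atBot_div_const hσ
  have hgap : Tendsto (fun t => Phi ((d₁ - t) / σ - (d₁ - d₂) / σ) / Phi ((d₁ - t) / σ))
      atTop (𝓝 0) :=
    (tendsto_Phi_sub_div_Phi_atBot (div_pos (sub_pos.2 hd) hσ)).comp hx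
  have hbdd : ∀ᶠ t in atTop, ‖Phi ((t - b₂) / σ) / Phi ((t - b₁) / σ)‖ ≤ 1 / Phi 0 := by
    filter_upwards [eventually_ge_atTop b₁] with t ht
    rw [Real.norm_of_nonneg (div_nonneg (Phi_pos _).le (Phi_pos _).le)]
    exact div_le_div₀ zero_le_one (Phi_le_one _) (Phi_pos 0)
      (Phi_mono (div_nonneg (sub_nonneg.2 ht) hσ.le))
  refine (hgap.zero_mul_isBoundedUnder_le ⟨_, hbdd⟩).congr fun t => ?_
  have hshift : (d₁ - t) / σ - (d₁ - d₂) / σ = (d₂ - t) / σ := by ring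
  simp only [hshift]
  ring
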